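/- arXiv:1501.04396 — 8 statements merged into one kernel-verified Lean document; each statement's English description precedes it below -/
import Mathlib

section
/- If the tensor product X × Y admits perfect state transfer from (w,u) to (z,v) with u ≠ v, then Y admits perfect state transfer from u to v (at some time). -/
open Matrix Kronecker

/-! Diagonalize `A = ∑ θ_r φ_r φ_rᴴ`; then `exp (iτ A ⊗ B) = ∑ φ_r φ_rᴴ ⊗ exp (iτθ_r B)`, so the
`((z,v),(w,u))` entry is `∑ φ_r(z) conj φ_r(w) · exp (iτθ_r B) v u`. This has modulus `1` by
hypothesis, while `∑ |φ_r(z) φ_r(w)| ≤ 1` by Cauchy–Schwarz and each entry of the unitary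
`exp (iτθ_r B)` has modulus at most `1`. Hence some `exp (iτθ_r B)` has a `(v,u)` entry of
modulus `1`, and its unit column `u` is then concentrated on `v`. -/

lemma exists_norm_eq_one_of_one_le_norm_sum_mul {ι R : Type*} [Fintype ι] [SeminormedRing R]
    (c g : ι → R) (hc : ∑ i, ‖c i‖ ≤ 1) (hg : ∀ i, ‖g i‖ ≤ 1)
    (h : 1 ≤ ‖∑ i, c i * g i‖) : ∃ i, ‖g i‖ = 1 := by
  by_contra! hne
  have hle : 1 ≤ ∑ i, ‖c i‖ * ‖g i‖ :=
    h.trans ((norm_sum_le _ _).trans (Finset.sum_le_sum fun i _ => norm_mul_le _ _))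
  obtain ⟨i, -, hi⟩ : ∃ i ∈ Finset.univ, ‖c i‖ * ‖g i‖ ≠ 0 := by
    by_contra! h0
    rw [Finset.sum_eq_zero h0] at hle
    exact one_pos.not_ge hle
  have hci : 0 < ‖c i‖ := (norm_nonneg _).lt_of_ne (left_ne_zero_of_mul hi).symm
  have : ∑ i, ‖c i‖ * ‖g i‖ < ∑ i, ‖c i‖ :=
    Finset.sum_lt_sum (fun j _ => mul_le_of_le_one_right (norm_nonneg _) (hg j))
      ⟨i, Finset.mem_univ _, mul_lt_of_lt_one_right hci ((hg i).lt_of_ne (hne i))⟩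
  linarith

namespace Matrix

section Unitary

variable {𝕜 m : Type*} [RCLike 𝕜] [Fintype m] [DecidableEq m] {U : Matrix m m 𝕜}

lemma sum_norm_sq_row_of_mem_unitaryGroup (hU : U ∈ unitaryGroup m 𝕜) (i : m) :
    ∑ j, ‖U i j‖ ^ 2 = 1 := by
  have h := congrFun (congrFun (mem_unitaryGroup_iff.mp hU) i) i
  simp only [mul_apply, star_apply, one_apply_eq, RCLike.star_def, RCLike.mul_conj] at h
  exact_mod_cast h

lemma sum_norm_sq_col_of_mem_unitaryGroup (hU : U ∈ unitaryGroup m 𝕜) (j : m) :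
    ∑ i, ‖U i j‖ ^ 2 = 1 := by
  simpa [star_apply] using sum_norm_sq_row_of_mem_unitaryGroup (Unitary.star_mem hU) j

lemma sum_norm_mul_norm_le_one_of_mem_unitaryGroup (hU : U ∈ unitaryGroup m 𝕜) (i i' : m) :
    ∑ j, ‖U i j‖ * ‖U i' j‖ ≤ 1 := by
  have := Finset.sum_mul_sq_le_sq_mul_sq Finset.univ (fun j => ‖U i j‖) (fun j => ‖U i' j‖)
  rw [sum_norm_sq_row_of_mem_unitaryGroup hU, sum_norm_sq_row_of_mem_unitaryGroup hU,
    one_mul] at this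
  exact (sq_le_one_iff₀ (by positivity)).mp this

lemma mulVec_single_eq_smul_single (hU : U ∈ unitaryGroup m 𝕜) {u v : m} (h : ‖U v u‖ = 1) :
    U *ᵥ Pi.single u 1 = U v u • Pi.single v 1 := by
  have hcol := sum_norm_sq_col_of_mem_unitaryGroup hU u
  rw [← Finset.add_sum_erase _ _ (Finset.mem_univ v), h, one_pow, add_eq_left,
    Finset.sum_eq_zero_iff_of_nonneg fun _ _ => by positivity] at hcol
  ext y
  by_cases hy : y = v
  · simp [hy]
  · simpa [mulVec_single_one, hy] using hcol y (Finset.mem_erase.mpr ⟨hy, Finset.mem_univ y⟩)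

end Unitary

lemma kronecker_mem_unitaryGroup {R m n : Type*} [CommRing R] [StarRing R] [Fintype m]
    [DecidableEq m] [Fintype n] [DecidableEq n] {U : Matrix m m R} (hU : U ∈ unitaryGroup m R)
    {V : Matrix n n R} (hV : V ∈ unitaryGroup n R) : U ⊗ₖ V ∈ unitaryGroup (m × n) R := by
  rw [mem_unitaryGroup_iff, star_eq_conjTranspose, conjTranspose_kronecker, ← mul_kronecker_mul,
    ← star_eq_conjTranspose, ← star_eq_conjTranspose, mem_unitaryGroup_iff.mp hU,
    mem_unitaryGroup_iff.mp hV, one_kronecker_one]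

lemma IsSymm.isHermitian_map_ofReal {m : Type*} {A : Matrix m m ℝ} (hA : A.IsSymm) :
    (A.map Complex.ofReal).IsHermitian :=
  (isHermitian_iff_isSymm.mpr hA).map _ fun _ => (Complex.conj_ofReal _).symm

variable {m n : Type*} [Fintype m] [DecidableEq m]

lemma reindex_blockDiagonal_eq_sum_single_kronecker {R : Type*} [Semiring R]
    (F : m → Matrix n n R) :
    reindex (Equiv.prodComm _ _) (Equiv.prodComm _ _) (blockDiagonal F) =
      ∑ r, single r r 1 ⊗ₖ F r := by
  ext ⟨i, y⟩ ⟨j, x⟩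
  by_cases h : i = j
  · subst h
    simp [blockDiagonal_apply, Matrix.sum_apply, single_apply]
  · simp [blockDiagonal_apply, Matrix.sum_apply, single_apply, ite_and, h]

lemma IsHermitian.exp_I_mul_smul_mem_unitaryGroup {H : Matrix m m ℂ} (hH : H.IsHermitian)
    (t : ℝ) : NormedSpace.exp ((Complex.I * t) • H) ∈ unitaryGroup m ℂ := by
  have hskew : star ((Complex.I * t) • H) = -((Complex.I * t) • H) := by
    rw [star_smul, hH.isSelfAdjoint.star_eq]
    simp [Complex.conj_ofReal]
  rw [mem_unitaryGroup_iff, star_eq_conjTranspose, ← exp_conjTranspose, ← star_eq_conjTranspose,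
    hskew, exp_neg]
  exact mul_nonsing_inv _ ((isUnit_iff_isUnit_det _).mp (isUnit_exp _))

lemma exp_unitary_conj {U : Matrix m m ℂ} (hU : U ∈ unitaryGroup m ℂ) (M : Matrix m m ℂ) :
    NormedSpace.exp (U * M * star U) = U * NormedSpace.exp M * star U := by
  simpa using exp_units_conj (Unitary.toUnits (⟨U, hU⟩ : unitaryGroup m ℂ)) M

lemma exp_reindex {l : Type*} [Fintype l] [DecidableEq l] (e : m ≃ l) (M : Matrix m m ℂ) :
    NormedSpace.exp (reindex e e M) = reindex e e (NormedSpace.exp M) := by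
  open scoped Norms.Operator in
  exact (NormedSpace.map_exp (reindexAlgEquiv ℂ ℂ e) (continuous_id.matrix_reindex e e) M).symm

variable [Fintype n] [DecidableEq n]

lemma exp_diagonal_kronecker (d : m → ℂ) (B : Matrix n n ℂ) :
    NormedSpace.exp (diagonal d ⊗ₖ B) = ∑ r, single r r 1 ⊗ₖ NormedSpace.exp (d r • B) := by
  rw [diagonal_kronecker, exp_reindex, exp_blockDiagonal,
    reindex_blockDiagonal_eq_sum_single_kronecker]
  open scoped Norms.Operator in
  exact Finset.sum_congr rfl fun r _ => by congr 1; exact Pi.coe_exp _ r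

lemma IsHermitian.exp_smul_kronecker {A : Matrix m m ℂ} (hA : A.IsHermitian)
    (B : Matrix n n ℂ) (c : ℂ) :
    NormedSpace.exp (c • (A ⊗ₖ B)) =
      ∑ r, ((hA.eigenvectorUnitary : Matrix m m ℂ) * single r r 1 *
        star (hA.eigenvectorUnitary : Matrix m m ℂ)) ⊗ₖ
        NormedSpace.exp ((c * hA.eigenvalues r) • B) := by
  set U : Matrix m m ℂ := (hA.eigenvectorUnitary : Matrix m m ℂ)
  have hconj : c • (A ⊗ₖ B) =
      (U ⊗ₖ 1) * (diagonal (fun r => (hA.eigenvalues r : ℂ)) ⊗ₖ (c • B)) * star (U ⊗ₖ 1) := by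
    conv_lhs => rw [hA.spectral_theorem, Unitary.conjStarAlgAut_apply]
    rw [star_eq_conjTranspose (U ⊗ₖ 1), conjTranspose_kronecker, conjTranspose_one,
      ← mul_kronecker_mul, ← mul_kronecker_mul, one_mul, mul_one, kronecker_smul]
    rfl
  rw [hconj, exp_unitary_conj (kronecker_mem_unitaryGroup hA.eigenvectorUnitary.2 (one_mem _)),
    exp_diagonal_kronecker, Finset.mul_sum, Finset.sum_mul]
  refine Finset.sum_congr rfl fun r _ => ?_
  rw [star_eq_conjTranspose, conjTranspose_kronecker, ← mul_kronecker_mul, ← mul_kronecker_mul]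
  simp [smul_smul, mul_comm, star_eq_conjTranspose, U]

lemma IsHermitian.exp_smul_kronecker_apply {A : Matrix m m ℂ} (hA : A.IsHermitian)
    (B : Matrix n n ℂ) (c : ℂ) (z w : m) (y u : n) :
    NormedSpace.exp (c • (A ⊗ₖ B)) (z, y) (w, u) =
      ∑ r, (hA.eigenvectorUnitary : Matrix m m ℂ) z r *
        star ((hA.eigenvectorUnitary : Matrix m m ℂ) w r) *
        NormedSpace.exp ((c * hA.eigenvalues r) • B) y u := by
  rw [hA.exp_smul_kronecker, Matrix.sum_apply]
  refine Finset.sum_congr rfl fun r _ => ?_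
  simp [mul_apply, single_apply, ite_and]

end Matrix

theorem stmt_7_general {m n : Type*} [Fintype m] [DecidableEq m] [Fintype n] [DecidableEq n]
    (A : Matrix m m ℝ) (B : Matrix n n ℝ) (hA : A.IsSymm) (hB : B.IsSymm)
    (w z : m) (u v : n) (τ : ℝ)
    (lam : ℂ) (hlam : ‖lam‖ = 1)
    (hpst : (NormedSpace.exp ((Complex.I * (τ : ℂ)) • (A ⊗ₖ B).map Complex.ofReal)).mulVec
        (Pi.single (w, u) 1 : m × n → ℂ) = lam • (Pi.single (z, v) 1 : m × n → ℂ)) :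
    ∃ (t : ℝ) (μ : ℂ), ‖μ‖ = 1 ∧
      (NormedSpace.exp ((Complex.I * (t : ℂ)) • B.map Complex.ofReal)).mulVec
        (Pi.single u 1 : n → ℂ) = μ • (Pi.single v 1 : n → ℂ) := by
  have hAc := hA.isHermitian_map_ofReal
  have hBc := hB.isHermitian_map_ofReal
  set U : Matrix m m ℂ := (hAc.eigenvectorUnitary : Matrix m m ℂ)
  set E : m → Matrix n n ℂ := fun r =>
    NormedSpace.exp ((Complex.I * ((τ * hAc.eigenvalues r : ℝ) : ℂ)) • B.map Complex.ofReal)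
  have hE (r : m) : E r ∈ unitaryGroup n ℂ := hBc.exp_I_mul_smul_mem_unitaryGroup _
  have hsum : ∑ r, U z r * star (U w r) * E r v u = lam := by
    have hmap : (A ⊗ₖ B).map Complex.ofReal = A.map Complex.ofReal ⊗ₖ B.map Complex.ofReal := by
      ext; simp
    have h := congrFun hpst (z, v)
    rw [mulVec_single_one, hmap] at h
    simpa [hAc.exp_smul_kronecker_apply, E, U, mul_assoc] using h
  obtain ⟨r, hr⟩ := exists_norm_eq_one_of_one_le_norm_sum_mul
    (fun r => U z r * star (U w r)) (fun r => E r v u)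
    (by simpa [U] using sum_norm_mul_norm_le_one_of_mem_unitaryGroup hAc.eigenvectorUnitary.2 z w)
    (fun r => entry_norm_bound_of_unitary (hE r) v u) (by rw [hsum, hlam])
  exact ⟨_, _, hr, mulVec_single_eq_smul_single (hE r) hr⟩

/-- If the tensor product `X × Y` admits perfect state transfer from `(w,u)` to
`(z,v)` with `u ≠ v`, then `Y` admits perfect state transfer from `u` to `v`
at some time. -/
theorem stmt_7 {m n : Type*} [Fintype m] [DecidableEq m] [Fintype n] [DecidableEq n]
    (A : Matrix m m ℝ) (B : Matrix n n ℝ) (hA : A.IsSymm) (hB : B.IsSymm)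
    (w z : m) (u v : n) (huv : u ≠ v) (τ : ℝ) (hτ : 0 < τ)
    (lam : ℂ) (hlam : ‖lam‖ = 1)
    (hpst : (NormedSpace.exp ((Complex.I * (τ : ℂ)) • (A ⊗ₖ B).map Complex.ofReal)).mulVec
        (Pi.single (w, u) 1 : m × n → ℂ) = lam • (Pi.single (z, v) 1 : m × n → ℂ)) :
    ∃ (t : ℝ) (μ : ℂ), ‖μ‖ = 1 ∧
      (NormedSpace.exp ((Complex.I * (t : ℂ)) • B.map Complex.ofReal)).mulVec
        (Pi.single u 1 : n → ℂ) = μ • (Pi.single v 1 : n → ℂ) :=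
  stmt_7_general A B hA hB w z u v τ lam hlam hpst
end

section
/- If the tensor product X × Y admits perfect state transfer from (w,u) to (z,u) (same second coordinate), then Y is periodic at u, i.e., there is a time t > 0 and unimodular μ with exp(itA(Y)) e_u = μ e_u. -/
/-!
Contracting the first tensor factor against an eigenvector `x` of `A` (the matrix
`P = xᵀ ⊗ I`) intertwines `A ⊗ B` with `θ B`, hence `exp (iτ A ⊗ B)` with `exp (iτθ B)`.
Applying `P` to the transfer `e_w ⊗ e_u ↦ λ e_z ⊗ e_u` gives
`x_w exp (iτθ B) e_u = λ x_z e_u`, so `e_u` is an eigenvector of the unitary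
`exp (iτθ B)`, whose eigenvalue has modulus one. If `θ < 0`, invert to get a positive time.
-/

open Matrix Kronecker NormedSpace

section Exp

variable {𝕂 : Type*} [RCLike 𝕂]

attribute [local instance] Matrix.linftyOpNormedRing Matrix.linftyOpNormedAlgebra

theorem Matrix.mul_exp_eq_exp_mul_of_mul_eq {p q : Type*} [Fintype p] [DecidableEq p]
    [Fintype q] [DecidableEq q] {P : Matrix q p 𝕂} {M : Matrix p p 𝕂} {M' : Matrix q q 𝕂}
    (h : P * M = M' * P) : P * exp M = exp M' * P := by
  have hpow (k : ℕ) : P * M ^ k = M' ^ k * P := by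
    induction k with
    | zero => simp
    | succ k ih => rw [pow_succ, pow_succ, ← Matrix.mul_assoc, ih, Matrix.mul_assoc, h,
        Matrix.mul_assoc]
  have hl := (expSeries_summable' (𝕂 := 𝕂) M).hasSum.map (addMonoidHomMulLeft P)
    (continuous_const.matrix_mul continuous_id)
  have hr := (expSeries_summable' (𝕂 := 𝕂) M').hasSum.map (addMonoidHomMulRight P)
    (continuous_id.matrix_mul continuous_const)
  rw [exp_eq_tsum 𝕂, exp_eq_tsum 𝕂]
  refine hl.unique ?_
  convert hr using 1
  · ext1 k
    simp [hpow]
  · rfl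

end Exp

section Inverse

variable {𝕂 : Type*} [RCLike 𝕂] {n : Type*} [Fintype n] [DecidableEq n]

theorem Matrix.exp_neg_mul_exp (M : Matrix n n 𝕂) : exp (-M) * exp M = 1 := by
  rw [← Matrix.exp_add_of_commute _ _ (Commute.refl M).neg_left, neg_add_cancel,
    NormedSpace.exp_zero]

theorem Matrix.exp_neg_mulVec_eq_inv_smul {M : Matrix n n 𝕂} {v : n → 𝕂} {μ : 𝕂}
    (h : exp M *ᵥ v = μ • v) (hμ : μ ≠ 0) : exp (-M) *ᵥ v = μ⁻¹ • v :=
  calc exp (-M) *ᵥ v = μ⁻¹ • exp (-M) *ᵥ (μ • v) := by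
        rw [mulVec_smul, smul_smul, inv_mul_cancel₀ hμ, one_smul]
    _ = μ⁻¹ • v := by rw [← h, mulVec_mulVec, exp_neg_mul_exp, one_mulVec]

end Inverse

section Unitary

variable {n : Type*} [Fintype n] [DecidableEq n]

theorem Matrix.exp_I_mul_smul_mem_unitaryGroup {H : Matrix n n ℂ} (hH : H.IsHermitian)
    (t : ℝ) : exp ((Complex.I * t) • H) ∈ unitaryGroup n ℂ := by
  have hskew : ((Complex.I * t) • H)ᴴ = -((Complex.I * t) • H) := by
    rw [conjTranspose_smul, hH.eq, ← neg_smul]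
    simp
  rw [mem_unitaryGroup_iff', star_eq_conjTranspose, ← exp_conjTranspose, hskew,
    exp_neg_mul_exp]

open scoped ComplexOrder in
theorem Matrix.norm_eq_one_of_mem_unitaryGroup_of_mulVec_eq_smul {U : Matrix n n ℂ}
    (hU : U ∈ unitaryGroup n ℂ) {v : n → ℂ} (hv : v ≠ 0) {μ : ℂ} (h : U *ᵥ v = μ • v) :
    ‖μ‖ = 1 := by
  have hnorm : star (U *ᵥ v) ⬝ᵥ (U *ᵥ v) = star v ⬝ᵥ v := by
    rw [star_mulVec, dotProduct_mulVec, vecMul_vecMul, ← star_eq_conjTranspose,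
      (mem_unitaryGroup_iff').mp hU, vecMul_one]
  rw [h, star_smul, smul_dotProduct, dotProduct_smul, smul_smul] at hnorm
  have hμ : star μ * μ = 1 := by
    simpa [dotProduct_star_self_eq_zero.not.mpr hv] using hnorm
  rw [Complex.star_def, Complex.conj_mul', ← Complex.ofReal_pow, Complex.ofReal_eq_one] at hμ
  exact (pow_eq_one_iff_of_nonneg (norm_nonneg μ) two_ne_zero).mp hμ

end Unitary

section Contraction

variable {R : Type*} [CommSemiring R] {m : Type*} (n : Type*) [Fintype m] [Fintype n]
  [DecidableEq n]

/-- `xᵀ ⊗ I`. The index type `n` is explicit: left to unification, `*` would pick up the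
`CStarMatrix` multiplication instance. -/
def contractFst (x : m → R) : Matrix n (m × n) R :=
  of fun j p => if p.2 = j then x p.1 else 0

variable {n}

theorem contractFst_mul_kronecker {x : m → R} {A : Matrix m m R} {θ : R}
    (hx : x ᵥ* A = θ • x) (B : Matrix n n R) :
    contractFst n x * (A ⊗ₖ B) = (θ • B) * contractFst n x := by
  ext j ⟨i', k'⟩
  have hx' : ∑ i, x i * A i i' = θ * x i' := congrFun hx i'
  simp only [contractFst, Matrix.mul_apply, of_apply, kroneckerMap_apply, ← mul_assoc, ite_mul,
    zero_mul, Fintype.sum_prod_type, Finset.sum_ite_eq', Finset.mem_univ, ↓reduceIte,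
    ← Finset.sum_mul, hx', Matrix.smul_apply, smul_eq_mul, mul_ite, mul_zero, Finset.sum_ite_eq]
  ring

theorem contractFst_mulVec_single [DecidableEq m] (x : m → R) (i : m) (k : n) :
    contractFst n x *ᵥ Pi.single (i, k) 1 = x i • Pi.single k 1 := by
  ext j
  simp [contractFst, Pi.single_apply, eq_comm]

end Contraction

theorem exp_mulVec_single_of_exp_kronecker_mulVec_single {𝕂 : Type*} [RCLike 𝕂] {m n : Type*}
    [Fintype m] [DecidableEq m] [Fintype n] [DecidableEq n] {A : Matrix m m 𝕂}
    {B : Matrix n n 𝕂} {x : m → 𝕂} {θ : 𝕂} (hx : x ᵥ* A = θ • x) (c : 𝕂) {w z : m} {u : n}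
    {lam : 𝕂} (h : exp (c • A ⊗ₖ B) *ᵥ Pi.single (w, u) 1 = lam • Pi.single (z, u) 1) :
    x w • exp ((c * θ) • B) *ᵥ Pi.single u 1 = (lam * x z) • Pi.single u 1 := by
  have hP : contractFst n x * (c • A ⊗ₖ B) = ((c * θ) • B) * contractFst n x := by
    rw [Matrix.mul_smul, contractFst_mul_kronecker hx, smul_mul, smul_mul, smul_smul]
  calc x w • exp ((c * θ) • B) *ᵥ Pi.single u 1
      = exp ((c * θ) • B) *ᵥ (contractFst n x *ᵥ Pi.single (w, u) 1) := by
        rw [contractFst_mulVec_single, mulVec_smul]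
    _ = contractFst n x *ᵥ (exp (c • A ⊗ₖ B) *ᵥ Pi.single (w, u) 1) := by
        rw [mulVec_mulVec, mulVec_mulVec, mul_exp_eq_exp_mul_of_mul_eq hP]
    _ = (lam * x z) • Pi.single u 1 := by
        rw [h, mulVec_smul, contractFst_mulVec_single, smul_smul]

theorem Matrix.IsSymm.vecMul_map_ofReal_of_mulVec_eq_smul {m : Type*} [Fintype m]
    {A : Matrix m m ℝ} (hA : A.IsSymm) {x : m → ℝ} {θ : ℝ} (hx : A *ᵥ x = θ • x) :
    (Complex.ofReal ∘ x) ᵥ* A.map Complex.ofReal = (θ : ℂ) • (Complex.ofReal ∘ x) := by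
  have hxA : x ᵥ* A = θ • x := by rw [← hA.eq, vecMul_transpose, hx]
  funext i
  exact (RingHom.map_vecMul Complex.ofRealHom A x i).symm.trans (by simp [hxA])

theorem Matrix.kronecker_map_ofReal {m n : Type*} (A : Matrix m m ℝ) (B : Matrix n n ℝ) :
    (A ⊗ₖ B).map Complex.ofReal = A.map Complex.ofReal ⊗ₖ B.map Complex.ofReal := by
  ext
  simp

theorem stmt_8_general {m n : Type*} [Fintype m] [DecidableEq m] [Fintype n] [DecidableEq n]
    (A : Matrix m m ℝ) (B : Matrix n n ℝ) (hA : A.IsSymm) (hB : B.IsSymm)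
    (w z : m) (u : n) (τ : ℝ) (hτ : 0 < τ)
    (hsupp : ∃ θ : ℝ, θ ≠ 0 ∧ ∃ x : m → ℝ,
      A.mulVec x = θ • x ∧ dotProduct x (Pi.single w 1) ≠ 0)
    (lam : ℂ)
    (hpst : (NormedSpace.exp ((Complex.I * (τ : ℂ)) • (A ⊗ₖ B).map Complex.ofReal)).mulVec
        (Pi.single (w, u) 1 : m × n → ℂ) = lam • (Pi.single (z, u) 1 : m × n → ℂ)) :
    ∃ t : ℝ, 0 < t ∧ ∃ μ : ℂ, ‖μ‖ = 1 ∧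
      (NormedSpace.exp ((Complex.I * (t : ℂ)) • B.map Complex.ofReal)).mulVec
        (Pi.single u 1 : n → ℂ) = μ • (Pi.single u 1 : n → ℂ) := by
  obtain ⟨θ, hθ, x, hx, hxw⟩ := hsupp
  rw [dotProduct_single, mul_one] at hxw
  rw [kronecker_map_ofReal] at hpst
  have htransfer := exp_mulVec_single_of_exp_kronecker_mulVec_single
    (hA.vecMul_map_ofReal_of_mulVec_eq_smul hx) _ hpst
  simp only [Function.comp_apply] at htransfer
  set μ : ℂ := lam * x z / x w
  have hper : exp ((Complex.I * ↑(τ * θ)) • B.map Complex.ofReal) *ᵥ Pi.single u 1 =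
      μ • Pi.single u 1 := by
    have hxw' : (x w : ℂ) ≠ 0 := by exact_mod_cast hxw
    rw [Complex.ofReal_mul, ← mul_assoc, ← inv_smul_smul₀ hxw' (exp _ *ᵥ _), htransfer,
      smul_smul, inv_mul_eq_div]
  have hμ : ‖μ‖ = 1 := norm_eq_one_of_mem_unitaryGroup_of_mulVec_eq_smul
    (exp_I_mul_smul_mem_unitaryGroup ((isHermitian_iff_isSymm.mpr hB).map _ fun _ => by simp) _)
    (Pi.single_ne_zero_iff.mpr one_ne_zero) hper
  rcases hθ.lt_or_gt with hneg | hpos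
  · refine ⟨-(τ * θ), by nlinarith, μ⁻¹, by rw [norm_inv, hμ, inv_one], ?_⟩
    rw [Complex.ofReal_neg, mul_neg, neg_smul]
    exact exp_neg_mulVec_eq_inv_smul hper (norm_ne_zero_iff.mp (hμ.trans_ne one_ne_zero))
  · exact ⟨τ * θ, mul_pos hτ hpos, μ, hμ, hper⟩

/-- If the tensor product `X × Y` admits perfect state transfer from `(w,u)` to
`(z,u)` (same second coordinate), and some nonzero eigenvalue of `A(X)` has an
eigenvector not orthogonal to `e_w`, then `Y` is periodic at `u`: there is a
time `t > 0` and unimodular `μ` with `exp(itA(Y)) e_u = μ e_u`. -/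
theorem stmt_8 {m n : Type*} [Fintype m] [DecidableEq m] [Fintype n] [DecidableEq n]
    (A : Matrix m m ℝ) (B : Matrix n n ℝ) (hA : A.IsSymm) (hB : B.IsSymm)
    (w z : m) (u : n) (hwz : w ≠ z) (τ : ℝ) (hτ : 0 < τ)
    (hsupp : ∃ θ : ℝ, θ ≠ 0 ∧ ∃ x : m → ℝ,
      A.mulVec x = θ • x ∧ dotProduct x (Pi.single w 1) ≠ 0)
    (lam : ℂ) (hlam : ‖lam‖ = 1)
    (hpst : (NormedSpace.exp ((Complex.I * (τ : ℂ)) • (A ⊗ₖ B).map Complex.ofReal)).mulVec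
        (Pi.single (w, u) 1 : m × n → ℂ) = lam • (Pi.single (z, u) 1 : m × n → ℂ)) :
    ∃ t : ℝ, 0 < t ∧ ∃ μ : ℂ, ‖μ‖ = 1 ∧
      (NormedSpace.exp ((Complex.I * (t : ℂ)) • B.map Complex.ofReal)).mulVec
        (Pi.single u 1 : n → ℂ) = μ • (Pi.single u 1 : n → ℂ) :=
  stmt_8_general A B hA hB w z u τ hτ hsupp lam hpst
end

section
/- Suppose A(X) = B ⊗ C + M ⊗ N where B, M are commuting symmetric m×m matrices. If X admits perfect state transfer from (w,u) to (z,v) at time τ, then for every common rank-1 spectral projector E_r of B and M, we have e_r^T P^T e_w = ± e_r^T P^T e_z, i.e., w and z are strongly cospectral with respect to B and M. -/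
/-! Let `p` be the `r`-th column of `P`. Since `P` diagonalizes `B` and `M` simultaneously, the
projector `F = p pᵀ = P (e_r e_rᵀ) Pᵀ` commutes with both, so `F ⊗ 1` commutes with the
Hamiltonian and hence with the unitary `U = exp(iτ(B ⊗ C + M ⊗ N))`. As `U` preserves the
quadratic form of any matrix commuting with it, perfect state transfer `U e_(w,u) = λ e_(z,v)`
with `|λ| = 1` forces `p_w² = (F ⊗ 1)_(w,u),(w,u) = (F ⊗ 1)_(z,v),(z,v) = p_z²`. -/

open Matrix Kronecker

theorem Units.commute_mul_mul_inv_of_commute {M : Type*} [Monoid M] (u : Mˣ) {a x : M}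
    (h : Commute (↑u⁻¹ * a * u) x) : Commute a (u * x * ↑u⁻¹) := by
  have hconj_mul : ∀ y z : M, u * y * ↑u⁻¹ * (u * z * ↑u⁻¹) = u * (y * z) * ↑u⁻¹ := by
    intro y z
    simp only [mul_assoc, Units.inv_mul_cancel_left]
  have hconj : u * (↑u⁻¹ * a * u) * ↑u⁻¹ = a := by
    simp only [mul_assoc, Units.mul_inv, mul_one, Units.mul_inv_cancel_left]
  rw [Commute, SemiconjBy, ← hconj, hconj_mul, hconj_mul, h.eq]

theorem Commute.kronecker {R m n : Type*} [CommSemiring R] [Fintype m] [Fintype n]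
    {a b : Matrix m m R} {c d : Matrix n n R} (hab : Commute a b) (hcd : Commute c d) :
    Commute (a ⊗ₖ c) (b ⊗ₖ d) := by
  simp only [Commute, SemiconjBy, ← mul_kronecker_mul, hab.eq, hcd.eq]

namespace Matrix

theorem IsSymm.kronecker {R m n : Type*} [CommSemiring R] {A : Matrix m m R}
    {B : Matrix n n R} (hA : A.IsSymm) (hB : B.IsSymm) : (A ⊗ₖ B).IsSymm := by
  rw [IsSymm, ← kroneckerMap_transpose, hA.eq, hB.eq]

theorem IsSymm.isHermitian_map_ofReal_s9 {m 𝕜 : Type*} [RCLike 𝕜] {H : Matrix m m ℝ}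
    (hH : H.IsSymm) : (H.map ((↑) : ℝ → 𝕜)).IsHermitian :=
  (isHermitian_iff_isSymm.mpr hH).map _ fun x => by simp

theorem commute_mul_diagonal_mul_transpose {m R : Type*} [Fintype m] [DecidableEq m]
    [CommRing R] {P A : Matrix m m R} (hP : P ∈ orthogonalGroup m R) {d : m → R}
    (hA : Pᵀ * A * P = diagonal d) (e : m → R) :
    Commute A (P * diagonal e * Pᵀ) := by
  let u : (Matrix m m R)ˣ :=
    ⟨P, Pᵀ, (mem_orthogonalGroup_iff m R).mp hP, (mem_orthogonalGroup_iff' m R).mp hP⟩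
  exact u.commute_mul_mul_inv_of_commute (hA ▸ commute_diagonal d e)

theorem mul_diagonal_single_mul_transpose_apply {m R : Type*} [Fintype m] [DecidableEq m]
    [CommSemiring R] (P : Matrix m m R) (r i j : m) :
    (P * diagonal (Pi.single r 1) * Pᵀ : Matrix m m R) i j = P i r * P j r := by
  rw [mul_apply]
  simp [mul_diagonal, Pi.single_apply]

theorem exp_mem_unitaryGroup {m 𝕜 : Type*} [Fintype m] [DecidableEq m] [RCLike 𝕜]
    {A : Matrix m m 𝕜} (hA : A ∈ skewAdjoint (Matrix m m 𝕜)) :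
    NormedSpace.exp A ∈ unitaryGroup m 𝕜 := by
  rw [mem_unitaryGroup_iff', star_eq_conjTranspose, ← exp_conjTranspose,
    ← star_eq_conjTranspose, skewAdjoint.mem_iff.mp hA,
    ← exp_add_of_commute _ _ (Commute.refl A).neg_left, neg_add_cancel, NormedSpace.exp_zero]

theorem apply_self_eq_of_commute_of_mulVec_single {m 𝕜 : Type*} [Fintype m] [DecidableEq m]
    [RCLike 𝕜] {U G : Matrix m m 𝕜} (hU : U ∈ unitaryGroup m 𝕜) (hGU : Commute G U) {a b : m}
    {c : 𝕜} (hc : ‖c‖ = 1)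
    (hUab : U *ᵥ Pi.single a 1 = c • Pi.single b 1) : G a a = G b b := by
  have hquad : ∀ i, star (Pi.single i 1 : m → 𝕜) ⬝ᵥ G *ᵥ Pi.single i 1 = G i i := by
    intro i
    simp
  have hc' : star c * c = 1 := by
    rw [RCLike.star_def, RCLike.conj_mul, hc]
    norm_num
  calc G a a = star (Pi.single a 1 : m → 𝕜) ⬝ᵥ (star U * U * G) *ᵥ Pi.single a 1 := by
        rw [mem_unitaryGroup_iff'.mp hU, one_mul, hquad]
    _ = star (U *ᵥ Pi.single a 1) ⬝ᵥ G *ᵥ (U *ᵥ Pi.single a 1) := by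
        rw [star_mulVec, ← dotProduct_mulVec, mulVec_mulVec, mulVec_mulVec, star_eq_conjTranspose,
          mul_assoc, mul_assoc, hGU.eq]
    _ = G b b := by
        rw [hUab, star_smul, mulVec_smul, smul_dotProduct, dotProduct_smul, hquad, smul_smul,
          smul_eq_mul, hc', one_mul]

end Matrix

theorem stmt_9_general {m n : Type*} [Fintype m] [DecidableEq m] [Fintype n] [DecidableEq n]
    (B M : Matrix m m ℝ) (hB : B.IsSymm) (hM : M.IsSymm)
    (C N : Matrix n n ℝ) (hC : C.IsSymm) (hN : N.IsSymm)
    (P : Matrix m m ℝ) (hP : P ∈ Matrix.orthogonalGroup m ℝ)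
    (β μ : m → ℝ)
    (hPB : Pᵀ * B * P = Matrix.diagonal β)
    (hPM : Pᵀ * M * P = Matrix.diagonal μ)
    (w z : m) (u v : n) (τ : ℝ) (lam : ℂ) (hlam : ‖lam‖ = 1)
    (hpst : (NormedSpace.exp
        ((Complex.I * (τ : ℂ)) • (B ⊗ₖ C + M ⊗ₖ N).map Complex.ofReal)).mulVec
        (Pi.single (w, u) 1 : m × n → ℂ) = lam • (Pi.single (z, v) 1 : m × n → ℂ)) :
    ∀ r : m, Pᵀ.mulVec (Pi.single w 1) r = Pᵀ.mulVec (Pi.single z 1) r ∨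
      Pᵀ.mulVec (Pi.single w 1) r = - Pᵀ.mulVec (Pi.single z 1) r := by
  intro r
  have hHF : Commute (B ⊗ₖ C + M ⊗ₖ N) ((P * diagonal (Pi.single r 1) * Pᵀ) ⊗ₖ 1) :=
    ((commute_mul_diagonal_mul_transpose hP hPB _).kronecker (Commute.one_right C)).add_left
      ((commute_mul_diagonal_mul_transpose hP hPM _).kronecker (Commute.one_right N))
  have hU := exp_mem_unitaryGroup (𝕜 := ℂ) <| IsSelfAdjoint.smul_mem_skewAdjoint
    (r := Complex.I * (τ : ℂ)) (by simp [skewAdjoint.mem_iff])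
    ((hB.kronecker hC).add (hM.kronecker hN)).isHermitian_map_ofReal_s9
  have hGU := ((hHF.symm.map Complex.ofRealHom.mapMatrix).smul_right
    (Complex.I * (τ : ℂ))).exp_right
  have hdiag := apply_self_eq_of_commute_of_mulVec_single hU hGU hlam hpst
  simp only [RingHom.mapMatrix_apply, map_apply, kroneckerMap_apply, one_apply_eq, mul_one,
    mul_diagonal_single_mul_transpose_apply, ← sq, Complex.ofRealHom_eq_coe,
    Complex.ofReal_inj] at hdiag
  simp only [mulVec_single_one, col_apply, transpose_apply]
  exact sq_eq_sq_iff_eq_or_eq_neg.mp hdiag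

/-- Suppose `A(X) = B ⊗ C + M ⊗ N` where `B, M` are commuting symmetric `m×m`
matrices simultaneously diagonalized by the orthogonal matrix `P`. If `X`
admits perfect state transfer from `(w,u)` to `(z,v)` at time `τ`, then for
every index `r`, `(Pᵀ e_w)_r = ± (Pᵀ e_z)_r`, i.e. `w` and `z` are strongly
cospectral with respect to `B` and `M`. -/
theorem stmt_9 {m n : Type*} [Fintype m] [DecidableEq m] [Fintype n] [DecidableEq n]
    (B M : Matrix m m ℝ) (hB : B.IsSymm) (hM : M.IsSymm) (hBM : B * M = M * B)
    (C N : Matrix n n ℝ) (hC : C.IsSymm) (hN : N.IsSymm)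
    (P : Matrix m m ℝ) (hP : P ∈ Matrix.orthogonalGroup m ℝ)
    (β μ : m → ℝ)
    (hPB : Pᵀ * B * P = Matrix.diagonal β)
    (hPM : Pᵀ * M * P = Matrix.diagonal μ)
    (w z : m) (u v : n) (τ : ℝ) (lam : ℂ) (hlam : ‖lam‖ = 1)
    (hpst : (NormedSpace.exp
        ((Complex.I * (τ : ℂ)) • (B ⊗ₖ C + M ⊗ₖ N).map Complex.ofReal)).mulVec
        (Pi.single (w, u) 1 : m × n → ℂ) = lam • (Pi.single (z, v) 1 : m × n → ℂ)) :
    ∀ r : m, Pᵀ.mulVec (Pi.single w 1) r = Pᵀ.mulVec (Pi.single z 1) r ∨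
      Pᵀ.mulVec (Pi.single w 1) r = - Pᵀ.mulVec (Pi.single z 1) r :=
  stmt_9_general B M hB hM C N hC hN P hP β μ hPB hPM w z u v τ lam hlam hpst
end

section
/- Suppose A(X) = B ⊗ C + M ⊗ N with B, M commuting symmetric matrices, and X admits perfect state transfer from (w,u) to (z,v) at time τ with phase λ. Then for every index r such that the projection of e_w onto the r-th common eigenvector is nonzero, exp(iτ(β_r C + μ_r N)) e_u = ±λ e_v. In particular if u ≠ v each such matrix L_r = β_r C + μ_r N admits perfect state transfer from u to v at time τ. -/
/-! Conjugation by `Pᵀ ⊗ 1` turns `B ⊗ C + M ⊗ N` into the block-diagonal matrix with blocks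
`L_r = β_r C + μ_r N`, so it intertwines `exp(iτ(B ⊗ C + M ⊗ N))` with the block-diagonal matrix
with blocks `exp(iτ L_r)`. Applied to the transfer equation, the `r`-th block reads
`P w r • exp(iτ L_r) e_u = (λ P z r) • e_v`. As `exp(iτ L_r)` is unitary, the coefficient
`λ (P z r / P w r)` has modulus one; since `|λ| = 1` the real ratio `P z r / P w r` is `±1`. -/

open Matrix Kronecker NormedSpace

section

variable {m n : Type*} [Fintype m] [DecidableEq m] [Fintype n] [DecidableEq n]

namespace Matrix

section CommRing

variable {R : Type*} [CommRing R]

theorem semiconjBy_transpose_of_mem_orthogonalGroup {P B : Matrix m m R}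
    (hP : P ∈ orthogonalGroup m R) {β : m → R} (hPB : Pᵀ * B * P = diagonal β) :
    SemiconjBy Pᵀ B (diagonal β) := by
  rw [SemiconjBy, ← hPB, mul_assoc, (mem_orthogonalGroup_iff m R).mp hP, mul_one]

omit [DecidableEq m] in
theorem semiconjBy_kronecker_one {X A B : Matrix m m R} (h : SemiconjBy X A B) (C : Matrix n n R) :
    SemiconjBy (X ⊗ₖ (1 : Matrix n n R)) (A ⊗ₖ C) (B ⊗ₖ C) := by
  rw [SemiconjBy, ← mul_kronecker_mul, ← mul_kronecker_mul, h.eq, one_mul, mul_one]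

omit [Fintype m] [Fintype n] [DecidableEq n] in
theorem diagonal_kronecker_add_diagonal_kronecker (β μ : m → R) (C N : Matrix n n R) :
    diagonal β ⊗ₖ C + diagonal μ ⊗ₖ N = reindex (Equiv.prodComm n m) (Equiv.prodComm n m)
      (blockDiagonal fun r => β r • C + μ r • N) := by
  rw [diagonal_kronecker, diagonal_kronecker]
  exact congrArg (reindex _ _) (blockDiagonal_add (fun r => β r • C) (fun r => μ r • N)).symm

theorem map_kronecker_one_mulVec_single {S : Type*} [CommRing S] {f : R → S} (hf : f 0 = 0)
    (A : Matrix m m R) (w : m) (u : n) :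
    (A ⊗ₖ (1 : Matrix n n R)).map f *ᵥ Pi.single (w, u) 1 =
      fun p => f (A p.1 w) * (Pi.single u 1 : n → S) p.2 := by
  ext ⟨s, j⟩
  simp [one_apply, Pi.single_apply, apply_ite f, hf]

omit [DecidableEq n] in
theorem reindex_blockDiagonal_mulVec_apply (F : m → Matrix n n R) (x : m × n → R) (r : m) (i : n) :
    (reindex (Equiv.prodComm n m) (Equiv.prodComm n m) (blockDiagonal F) *ᵥ x) (r, i) =
      (F r *ᵥ fun j => x (r, j)) i := by
  simp [mulVec, dotProduct, Fintype.sum_prod_type_right, blockDiagonal_apply]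

end CommRing

theorem exp_reindex_s10 {𝔸 : Type*} [Ring 𝔸] [TopologicalSpace 𝔸] [IsTopologicalRing 𝔸] [T2Space 𝔸]
    [Algebra ℚ 𝔸] (e : m ≃ n) (A : Matrix m m 𝔸) : exp (reindex e e A) = reindex e e (exp A) := by
  let L : Matrix m m 𝔸 ≃L[ℚ] Matrix n n 𝔸 :=
    { (reindexAlgEquiv ℚ 𝔸 e).toLinearEquiv with
      continuous_toFun := continuous_id.matrix_reindex e e
      continuous_invFun := continuous_id.matrix_reindex e.symm e.symm }
  have hpow (k : ℕ) : reindex e e A ^ k = reindex e e (A ^ k) :=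
    (map_pow (reindexAlgEquiv ℚ 𝔸 e) A k).symm
  simp_rw [exp_eq_tsum_rat, hpow]
  exact (L.map_tsum (L := SummationFilter.unconditional ℕ)
    (f := fun k : ℕ => ((k.factorial : ℚ)⁻¹) • A ^ k)).symm

/- `exp` only depends on the topology; here and in `semiconjBy_exp` the `L^∞` operator norm is
installed locally so that the Banach-algebra lemmas about `exp` apply. -/
theorem exp_blockDiagonal_eq_blockDiagonal_exp (v : m → Matrix n n ℂ) :
    exp (blockDiagonal v) = blockDiagonal fun r => exp (v r) := by
  let _ : NormedRing (Matrix n n ℂ) := Matrix.linftyOpNormedRing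
  let _ : NormedAlgebra ℂ (Matrix n n ℂ) := Matrix.linftyOpNormedAlgebra
  let _ : NormedAlgebra ℚ (Matrix n n ℂ) := Matrix.linftyOpNormedAlgebra
  rw [exp_blockDiagonal]
  exact congrArg blockDiagonal (Pi.exp_def v)

theorem semiconjBy_exp {X A B : Matrix m m ℂ} (h : SemiconjBy X A B) :
    SemiconjBy X (exp A) (exp B) := by
  let _ : NormedRing (Matrix m m ℂ) := Matrix.linftyOpNormedRing
  let _ : NormedAlgebra ℂ (Matrix m m ℂ) := Matrix.linftyOpNormedAlgebra
  let _ : NormedAlgebra ℚ (Matrix m m ℂ) := Matrix.linftyOpNormedAlgebra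
  exact h.exp_right

section RCLike

variable {𝕜 : Type*} [RCLike 𝕜]

theorem exp_mem_unitaryGroup_of_conjTranspose_eq_neg {X : Matrix n n 𝕜} (hX : Xᴴ = -X) :
    exp X ∈ unitaryGroup n 𝕜 := by
  rw [mem_unitaryGroup_iff', star_eq_conjTranspose, ← exp_conjTranspose, hX,
    ← exp_add_of_commute _ _ (Commute.refl X).neg_left, neg_add_cancel, exp_zero]

theorem norm_eq_one_of_mulVec_single_eq_smul_single {U : Matrix n n 𝕜}
    (hU : U ∈ unitaryGroup n 𝕜) {u v : n} {c : 𝕜}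
    (h : U *ᵥ Pi.single u 1 = c • Pi.single v 1) : ‖c‖ = 1 := by
  have hcol (i : n) : U i u = c * (Pi.single v 1 : n → 𝕜) i := by
    simpa using congrFun h i
  have huu := congrFun (congrFun ((mem_unitaryGroup_iff' (A := U)).mp hU) u) u
  simp only [star_eq_conjTranspose, mul_apply, conjTranspose_apply, hcol, one_apply_eq,
    Pi.single_apply, mul_ite, mul_one, mul_zero, Finset.sum_ite_eq', Finset.mem_univ, if_true,
    RCLike.star_def, RCLike.conj_mul] at huu
  have hsq : ‖c‖ ^ 2 = 1 := by exact_mod_cast huu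
  exact (pow_eq_one_iff_of_nonneg (norm_nonneg c) two_ne_zero).mp hsq

end RCLike

end Matrix

theorem semiconjBy_exp_smul_kronecker_add_kronecker {P B M : Matrix m m ℝ}
    (hP : P ∈ orthogonalGroup m ℝ) {β μ : m → ℝ} (hPB : Pᵀ * B * P = diagonal β)
    (hPM : Pᵀ * M * P = diagonal μ) (C N : Matrix n n ℝ) (t : ℂ) :
    SemiconjBy ((Pᵀ ⊗ₖ 1).map Complex.ofReal) (exp (t • (B ⊗ₖ C + M ⊗ₖ N).map Complex.ofReal))
      (reindex (Equiv.prodComm n m) (Equiv.prodComm n m)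
        (blockDiagonal fun r => exp (t • (β r • C + μ r • N).map Complex.ofReal))) := by
  have hreal : SemiconjBy (Pᵀ ⊗ₖ (1 : Matrix n n ℝ)) (B ⊗ₖ C + M ⊗ₖ N)
      (reindex (Equiv.prodComm n m) (Equiv.prodComm n m)
        (blockDiagonal fun r => β r • C + μ r • N)) := by
    rw [← diagonal_kronecker_add_diagonal_kronecker]
    exact (semiconjBy_kronecker_one (semiconjBy_transpose_of_mem_orthogonalGroup hP hPB) C).add_right
      (semiconjBy_kronecker_one (semiconjBy_transpose_of_mem_orthogonalGroup hP hPM) N)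
  have hblock : t • (reindex (Equiv.prodComm n m) (Equiv.prodComm n m)
        (blockDiagonal fun r => β r • C + μ r • N)).map Complex.ofReal =
      reindex (Equiv.prodComm n m) (Equiv.prodComm n m)
        (blockDiagonal fun r => t • (β r • C + μ r • N).map Complex.ofReal) := by
    simp only [reindex_apply, ← submatrix_map, blockDiagonal_map _ _ Complex.ofReal_zero]
    exact congrArg (submatrix · _ _)
      (blockDiagonal_smul t fun r => (β r • C + μ r • N).map Complex.ofReal).symm
  have hcomplex := (hreal.map Complex.ofRealHom.mapMatrix).smul_right t
  simp only [RingHom.mapMatrix_apply] at hcomplex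
  rw [← exp_blockDiagonal_eq_blockDiagonal_exp, ← exp_reindex_s10, ← hblock]
  exact semiconjBy_exp hcomplex

theorem smul_exp_mulVec_single_of_exp_kronecker_mulVec_single {P B M : Matrix m m ℝ}
    (hP : P ∈ orthogonalGroup m ℝ) {β μ : m → ℝ} (hPB : Pᵀ * B * P = diagonal β)
    (hPM : Pᵀ * M * P = diagonal μ) (C N : Matrix n n ℝ) (t : ℂ) {w z : m} {u v : n} {lam : ℂ}
    (hpst : exp (t • (B ⊗ₖ C + M ⊗ₖ N).map Complex.ofReal) *ᵥ Pi.single (w, u) 1 =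
      lam • Pi.single (z, v) 1) (r : m) :
    (P w r : ℂ) • (exp (t • (β r • C + μ r • N).map Complex.ofReal) *ᵥ Pi.single u 1) =
      (lam * P z r) • Pi.single v 1 := by
  have h := congrArg ((Pᵀ ⊗ₖ (1 : Matrix n n ℝ)).map Complex.ofReal *ᵥ ·) hpst
  rw [mulVec_mulVec, (semiconjBy_exp_smul_kronecker_add_kronecker hP hPB hPM C N t).eq,
    ← mulVec_mulVec, mulVec_smul, map_kronecker_one_mulVec_single Complex.ofReal_zero,
    map_kronecker_one_mulVec_single Complex.ofReal_zero] at h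
  rw [← mulVec_smul]
  ext i
  have hri := congrFun h (r, i)
  rw [reindex_blockDiagonal_mulVec_apply] at hri
  convert hri using 2
  · ext j
    simp
  · simp [mul_assoc]

theorem exp_I_mul_smul_map_ofReal_mem_unitaryGroup {L : Matrix n n ℝ} (hL : L.IsSymm) (τ : ℝ) :
    exp ((Complex.I * τ) • L.map Complex.ofReal) ∈ unitaryGroup n ℂ := by
  refine exp_mem_unitaryGroup_of_conjTranspose_eq_neg ?_
  ext i j
  simp [hL.apply i j, Complex.conj_ofReal]

end

theorem stmt_10_general {m n : Type*} [Fintype m] [DecidableEq m] [Fintype n] [DecidableEq n]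
    (B M : Matrix m m ℝ)
    (C N : Matrix n n ℝ) (hC : C.IsSymm) (hN : N.IsSymm)
    (P : Matrix m m ℝ) (hP : P ∈ Matrix.orthogonalGroup m ℝ)
    (β μ : m → ℝ)
    (hPB : Pᵀ * B * P = Matrix.diagonal β)
    (hPM : Pᵀ * M * P = Matrix.diagonal μ)
    (w z : m) (u v : n) (τ : ℝ) (lam : ℂ) (hlam : ‖lam‖ = 1)
    (hpst : (NormedSpace.exp
        ((Complex.I * (τ : ℂ)) • (B ⊗ₖ C + M ⊗ₖ N).map Complex.ofReal)).mulVec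
        (Pi.single (w, u) 1 : m × n → ℂ) = lam • (Pi.single (z, v) 1 : m × n → ℂ)) :
    ∀ r : m, Pᵀ.mulVec (Pi.single w 1) r ≠ 0 →
      (NormedSpace.exp ((Complex.I * (τ : ℂ)) •
          (β r • C + μ r • N).map Complex.ofReal)).mulVec (Pi.single u 1 : n → ℂ)
        = lam • (Pi.single v 1 : n → ℂ) ∨
      (NormedSpace.exp ((Complex.I * (τ : ℂ)) •
          (β r • C + μ r • N).map Complex.ofReal)).mulVec (Pi.single u 1 : n → ℂ)
        = (-lam) • (Pi.single v 1 : n → ℂ) := by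
  intro r hr
  have hPwr : (P w r : ℂ) ≠ 0 := by simpa using hr
  set d : ℝ := P z r / P w r
  have hE : exp ((Complex.I * τ) • (β r • C + μ r • N).map Complex.ofReal) *ᵥ Pi.single u 1 =
      (lam * d) • Pi.single v 1 := by
    rw [← inv_smul_smul₀ hPwr (_ *ᵥ _),
      smul_exp_mulVec_single_of_exp_kronecker_mulVec_single hP hPB hPM C N _ hpst r, smul_smul]
    congr 1
    push_cast [d]
    field_simp
  have hd : |d| = 1 := by
    have := norm_eq_one_of_mulVec_single_eq_smul_single
      (exp_I_mul_smul_map_ofReal_mem_unitaryGroup ((hC.smul _).add (hN.smul _)) τ) hE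
    rwa [norm_mul, hlam, one_mul, Complex.norm_real, Real.norm_eq_abs] at this
  rcases (abs_eq zero_le_one).mp hd with h | h
  · left
    simp [hE, h]
  · right
    simp [hE, h]

/-- Suppose `A(X) = B ⊗ C + M ⊗ N` with `B, M` commuting symmetric matrices
simultaneously diagonalized by the orthogonal `P` with eigenvalues `β r, μ r`,
and `X` admits perfect state transfer from `(w,u)` to `(z,v)` at time `τ` with
phase `λ`. Then for every index `r` such that the projection of `e_w` onto the
`r`-th common eigenvector is nonzero, `exp(iτ(β_r C + μ_r N)) e_u = ±λ e_v`. -/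
theorem stmt_10 {m n : Type*} [Fintype m] [DecidableEq m] [Fintype n] [DecidableEq n]
    (B M : Matrix m m ℝ) (hB : B.IsSymm) (hM : M.IsSymm) (hBM : B * M = M * B)
    (C N : Matrix n n ℝ) (hC : C.IsSymm) (hN : N.IsSymm)
    (P : Matrix m m ℝ) (hP : P ∈ Matrix.orthogonalGroup m ℝ)
    (β μ : m → ℝ)
    (hPB : Pᵀ * B * P = Matrix.diagonal β)
    (hPM : Pᵀ * M * P = Matrix.diagonal μ)
    (w z : m) (u v : n) (τ : ℝ) (lam : ℂ) (hlam : ‖lam‖ = 1)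
    (hpst : (NormedSpace.exp
        ((Complex.I * (τ : ℂ)) • (B ⊗ₖ C + M ⊗ₖ N).map Complex.ofReal)).mulVec
        (Pi.single (w, u) 1 : m × n → ℂ) = lam • (Pi.single (z, v) 1 : m × n → ℂ)) :
    ∀ r : m, Pᵀ.mulVec (Pi.single w 1) r ≠ 0 →
      (NormedSpace.exp ((Complex.I * (τ : ℂ)) •
          (β r • C + μ r • N).map Complex.ofReal)).mulVec (Pi.single u 1 : n → ℂ)
        = lam • (Pi.single v 1 : n → ℂ) ∨
      (NormedSpace.exp ((Complex.I * (τ : ℂ)) •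
          (β r • C + μ r • N).map Complex.ofReal)).mulVec (Pi.single u 1 : n → ℂ)
        = (-lam) • (Pi.single v 1 : n → ℂ) :=
  stmt_10_general B M C N hC hN P hP β μ hPB hPM w z u v τ lam hlam hpst
end

section
/- The graph X ⋉ Y admits perfect state transfer from (0,u) to (0,v) at time τ (with u ≠ v) if and only if there exists λ with |λ|=1 such that exp(iτ(A+B)) e_u = λ e_v and exp(iτ(A−B)) e_u = λ e_v, i.e., A+B and A−B both admit uv-perfect state transfer at time τ with the same phase. -/
/-!
The map `(P, Q) ↦ ½ [[P + Q, P - Q], [P - Q, P + Q]]` is conjugation of `diag(P, Q)` by the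
block Hadamard matrix `[[1, 1], [1, -1]]`, hence a continuous algebra homomorphism, and it sends
`(X + Y, X - Y)` to `[[X, Y], [Y, X]]`. So it commutes with `exp`, and with `E± = exp (iτ(A ± B))`
the walk on `X ⋉ Y` sends `e_u ⊕ 0` to `½ (E₊ + E₋) e_u ⊕ ½ (E₊ - E₋) e_u`. This equals
`γ e_v ⊕ 0` exactly when `E₊ e_u = E₋ e_u = γ e_v`.
-/

open Matrix

theorem Sum.elim_smul_smul {M α β γ : Type*} [SMul M γ] (c : M) (f : α → γ) (g : β → γ) :
    Sum.elim (c • f) (c • g) = c • Sum.elim f g := by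
  ext x
  cases x <;> rfl

namespace Matrix

variable {n : Type*} [Fintype n] [DecidableEq n]

section Field

variable {K : Type*} [Field K] [NeZero (2 : K)]

variable (n K) in
def sumDiffBlocksAlgHom :
    (Matrix n n K × Matrix n n K) →ₐ[K] Matrix (n ⊕ n) (n ⊕ n) K where
  toFun p := fromBlocks ((2 : K)⁻¹ • (p.1 + p.2)) ((2 : K)⁻¹ • (p.1 - p.2))
    ((2 : K)⁻¹ • (p.1 - p.2)) ((2 : K)⁻¹ • (p.1 + p.2))
  map_one' := by
    rw [← fromBlocks_one]
    congr 1 <;> simp only [Prod.fst_one, Prod.snd_one, sub_self, smul_zero]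
      <;> match_scalars <;> field_simp <;> ring
  map_mul' p q := by
    rw [fromBlocks_multiply]
    congr 1 <;> simp only [Prod.fst_mul, Prod.snd_mul, smul_mul_smul_comm, mul_add, add_mul,
      mul_sub, sub_mul] <;> match_scalars <;> field_simp <;> ring
  map_zero' := by simp
  map_add' p q := by
    rw [fromBlocks_add]
    congr 1 <;> simp only [Prod.fst_add, Prod.snd_add] <;> module
  commutes' r := by
    rw [Algebra.algebraMap_eq_smul_one, Algebra.algebraMap_eq_smul_one, ← fromBlocks_one,
      fromBlocks_smul]
    congr 1 <;> simp only [Prod.smul_fst, Prod.smul_snd, Prod.fst_one, Prod.snd_one, sub_self,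
      smul_zero] <;> match_scalars <;> field_simp <;> ring

theorem sumDiffBlocksAlgHom_apply (P Q : Matrix n n K) :
    sumDiffBlocksAlgHom n K (P, Q) = fromBlocks ((2 : K)⁻¹ • (P + Q)) ((2 : K)⁻¹ • (P - Q))
      ((2 : K)⁻¹ • (P - Q)) ((2 : K)⁻¹ • (P + Q)) :=
  rfl

theorem sumDiffBlocksAlgHom_add_sub (X Y : Matrix n n K) :
    sumDiffBlocksAlgHom n K (X + Y, X - Y) = fromBlocks X Y Y X := by
  rw [sumDiffBlocksAlgHom_apply]
  congr 1 <;> match_scalars <;> field_simp <;> ring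

theorem sumDiffBlocksAlgHom_mulVec_elim_zero_eq_iff (P Q : Matrix n n K) (x y : n → K) :
    sumDiffBlocksAlgHom n K (P, Q) *ᵥ Sum.elim x 0 = Sum.elim y 0 ↔
      P *ᵥ x = y ∧ Q *ᵥ x = y := by
  simp only [sumDiffBlocksAlgHom_apply, fromBlocks_mulVec, Sum.elim_comp_inl, Sum.elim_comp_inr,
    mulVec_zero, add_zero, Sum.elim_eq_iff, smul_mulVec, add_mulVec, sub_mulVec]
  constructor
  · rintro ⟨hsum, hdiff⟩
    have hPQ : P *ᵥ x = Q *ᵥ x :=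
      sub_eq_zero.mp ((smul_eq_zero_iff_right (inv_ne_zero two_ne_zero)).mp hdiff)
    have hP : P *ᵥ x = y := by
      rw [← hsum, ← hPQ, ← two_smul K, inv_smul_smul₀ two_ne_zero]
    exact ⟨hP, hPQ ▸ hP⟩
  · rintro ⟨hP, hQ⟩
    rw [hP, hQ, sub_self, smul_zero]
    exact ⟨by rw [← two_smul K, inv_smul_smul₀ two_ne_zero], rfl⟩

end Field

section Exp

open NormedSpace

variable {𝕜 : Type*} [RCLike 𝕜]

theorem exp_sumDiffBlocksAlgHom (P Q : Matrix n n 𝕜) :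
    exp (sumDiffBlocksAlgHom n 𝕜 (P, Q)) = sumDiffBlocksAlgHom n 𝕜 (exp P, exp Q) := by
  let : NormedRing (Matrix n n 𝕜) := Matrix.linftyOpNormedRing
  let : NormedAlgebra 𝕜 (Matrix n n 𝕜) := Matrix.linftyOpNormedAlgebra
  let : NormedAlgebra ℚ (Matrix n n 𝕜) := .restrictScalars ℚ 𝕜 _
  let : NormedRing (Matrix (n ⊕ n) (n ⊕ n) 𝕜) := Matrix.linftyOpNormedRing
  -- stated for the uniformity of the local norm, not the default one on `Matrix`
  have : @CompleteSpace (Matrix n n 𝕜) PseudoMetricSpace.toUniformSpace :=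
    FiniteDimensional.complete 𝕜 _
  have hcont : Continuous (sumDiffBlocksAlgHom n 𝕜) :=
    (sumDiffBlocksAlgHom n 𝕜).toLinearMap.continuous_of_finiteDimensional
  refine (map_exp _ hcont (P, Q)).symm.trans ?_
  exact congrArg _ (Prod.ext (Prod.fst_exp _) (Prod.snd_exp _))

theorem exp_fromBlocks_self (X Y : Matrix n n 𝕜) :
    exp (fromBlocks X Y Y X) = sumDiffBlocksAlgHom n 𝕜 (exp (X + Y), exp (X - Y)) := by
  rw [← sumDiffBlocksAlgHom_add_sub, exp_sumDiffBlocksAlgHom]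

end Exp

end Matrix

theorem stmt_14_general {n : Type*} [Fintype n] [DecidableEq n]
    (A B : Matrix n n ℝ) (u v : n) (τ : ℝ) :
    (∃ γ : ℂ, ‖γ‖ = 1 ∧
      (NormedSpace.exp ((Complex.I * (τ : ℂ)) •
          (Matrix.fromBlocks A B B A).map Complex.ofReal)).mulVec
        (Pi.single (Sum.inl u) 1 : n ⊕ n → ℂ)
        = γ • (Pi.single (Sum.inl v) 1 : n ⊕ n → ℂ)) ↔
    (∃ lam : ℂ, ‖lam‖ = 1 ∧
      (NormedSpace.exp ((Complex.I * (τ : ℂ)) • (A + B).map Complex.ofReal)).mulVec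
        (Pi.single u 1 : n → ℂ) = lam • (Pi.single v 1 : n → ℂ) ∧
      (NormedSpace.exp ((Complex.I * (τ : ℂ)) • (A - B).map Complex.ofReal)).mulVec
        (Pi.single u 1 : n → ℂ) = lam • (Pi.single v 1 : n → ℂ)) := by
  set c : ℂ := Complex.I * τ
  have hblocks : c • (fromBlocks A B B A).map Complex.ofReal =
      fromBlocks (c • A.map Complex.ofReal) (c • B.map Complex.ofReal)
        (c • B.map Complex.ofReal) (c • A.map Complex.ofReal) := by
    rw [fromBlocks_map, fromBlocks_smul]
  have hsum : c • (A + B).map Complex.ofReal =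
      c • A.map Complex.ofReal + c • B.map Complex.ofReal := by
    rw [Matrix.map_add _ Complex.ofReal_add, smul_add]
  have hdiff : c • (A - B).map Complex.ofReal =
      c • A.map Complex.ofReal - c • B.map Complex.ofReal := by
    rw [Matrix.map_sub _ Complex.ofReal_sub, smul_sub]
  rw [hblocks, exp_fromBlocks_self, ← hsum, ← hdiff, ← Sum.elim_single_zero,
    ← Sum.elim_single_zero]
  simp only [← Sum.elim_smul_smul, smul_zero, sumDiffBlocksAlgHom_mulVec_elim_zero_eq_iff]

/-- For `u ≠ v`, `X ⋉ Y` admits perfect state transfer from `(0,u)` to `(0,v)`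
at time `τ` iff there is a unimodular `λ` with `exp(iτ(A+B)) e_u = λ e_v` and
`exp(iτ(A−B)) e_u = λ e_v` (both summands admit `uv`-PST with the same phase). -/
theorem stmt_14 {n : Type*} [Fintype n] [DecidableEq n]
    (A B : Matrix n n ℝ) (hA : A.IsSymm) (hB : B.IsSymm)
    (u v : n) (huv : u ≠ v) (τ : ℝ) :
    (∃ γ : ℂ, ‖γ‖ = 1 ∧
      (NormedSpace.exp ((Complex.I * (τ : ℂ)) •
          (Matrix.fromBlocks A B B A).map Complex.ofReal)).mulVec
        (Pi.single (Sum.inl u) 1 : n ⊕ n → ℂ)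
        = γ • (Pi.single (Sum.inl v) 1 : n ⊕ n → ℂ)) ↔
    (∃ lam : ℂ, ‖lam‖ = 1 ∧
      (NormedSpace.exp ((Complex.I * (τ : ℂ)) • (A + B).map Complex.ofReal)).mulVec
        (Pi.single u 1 : n → ℂ) = lam • (Pi.single v 1 : n → ℂ) ∧
      (NormedSpace.exp ((Complex.I * (τ : ℂ)) • (A - B).map Complex.ofReal)).mulVec
        (Pi.single u 1 : n → ℂ) = lam • (Pi.single v 1 : n → ℂ)) :=
  stmt_14_general A B u v τ
end

section
/- If A(X) and A(Y) commute, and there is a time τ > 0 at which X is periodic at u with some unimodular phase μ and Y is periodic at u with phase i or −i (i.e., exp(iτA(Y)) e_u = ±i e_u), then X ⋉ Y admits perfect state transfer between (0,u) and (1,u) at time τ. -/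
/-!
Put `X = iτ A(X)` and `Y = iτ A(Y)`. Conjugating `[[X, Y], [Y, X]]` by `[[1, 1], [1, -1]]` makes
it block diagonal with blocks `X + Y` and `X - Y`, so the first block column of its exponential
is `½ (exp (X + Y) + exp (X - Y))` over `½ (exp (X + Y) - exp (X - Y))`. As `X` and `Y` commute,
`e_u` is an eigenvector of `exp (X ± Y)` with eigenvalues `μ c` and `μ c⁻¹`, where `c = ±i` is
the phase of `Y`. Since `c⁻¹ = -c`, the top block kills `e_u` and the bottom one sends it to
`μ c e_u`.
-/

open Matrix NormedSpace

namespace Matrix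

variable {α : Type*} {m n : Type*} [Fintype m] [DecidableEq m] [Fintype n] [DecidableEq n]

def fromBlocksDiagonalRingHom [Semiring α] :
    Matrix m m α × Matrix n n α →+* Matrix (m ⊕ n) (m ⊕ n) α where
  toFun p := fromBlocks p.1 0 0 p.2
  map_one' := fromBlocks_one
  map_mul' p q := by simp [fromBlocks_multiply]
  map_zero' := fromBlocks_zero
  map_add' p q := by simp [fromBlocks_add]

theorem continuous_fromBlocksDiagonalRingHom [Semiring α] [TopologicalSpace α] :
    Continuous (fromBlocksDiagonalRingHom : Matrix m m α × Matrix n n α →+* _) :=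
  continuous_fst.matrix_fromBlocks continuous_const continuous_const continuous_snd

variable {𝕂 : Type*} [RCLike 𝕂]

open scoped Matrix.Norms.Operator in
theorem exp_fromBlocks_zero (X : Matrix m m 𝕂) (Y : Matrix n n 𝕂) :
    exp (fromBlocks X 0 0 Y) = fromBlocks (exp X) 0 0 (exp Y) := by
  -- `map_exp` wants completeness for the uniformity of the operator norm, which instance search
  -- does not identify with the entrywise uniformity of `Matrix`.
  have : @CompleteSpace (Matrix m m 𝕂) PseudoMetricSpace.toUniformSpace :=
    FiniteDimensional.complete 𝕂 _
  have : @CompleteSpace (Matrix n n 𝕂) PseudoMetricSpace.toUniformSpace :=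
    FiniteDimensional.complete 𝕂 _
  have h := (map_exp (fromBlocksDiagonalRingHom : Matrix m m 𝕂 × Matrix n n 𝕂 →+* _)
    (by exact continuous_fromBlocksDiagonalRingHom) (X, Y)).symm
  simp only [fromBlocksDiagonalRingHom, RingHom.coe_mk, MonoidHom.coe_mk, OneHom.coe_mk] at h
  rwa [Prod.fst_exp, Prod.snd_exp] at h

variable (n 𝕂) in
def blockHadamard : Matrix (n ⊕ n) (n ⊕ n) 𝕂 :=
  fromBlocks 1 1 1 (-1)

theorem smul_blockHadamard_mul_blockHadamard :
    (2⁻¹ : 𝕂) • blockHadamard n 𝕂 * blockHadamard n 𝕂 = 1 := by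
  rw [smul_mul, blockHadamard, fromBlocks_multiply, ← fromBlocks_one, fromBlocks_smul]
  congr 1 <;> simp [← two_smul 𝕂]

theorem inv_blockHadamard : (blockHadamard n 𝕂)⁻¹ = (2⁻¹ : 𝕂) • blockHadamard n 𝕂 :=
  inv_eq_left_inv smul_blockHadamard_mul_blockHadamard

theorem isUnit_blockHadamard : IsUnit (blockHadamard n 𝕂) :=
  (isUnit_iff_isUnit_det _).mpr (isUnit_det_of_left_inverse smul_blockHadamard_mul_blockHadamard)

theorem fromBlocks_self_swap_eq_conj (X Y : Matrix n n 𝕂) :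
    fromBlocks X Y Y X =
      (blockHadamard n 𝕂)⁻¹ * fromBlocks (X + Y) 0 0 (X - Y) * blockHadamard n 𝕂 := by
  rw [inv_blockHadamard, smul_mul, smul_mul, blockHadamard]
  simp only [fromBlocks_multiply, fromBlocks_smul]
  congr 1 <;> simp <;> module

theorem exp_fromBlocks_self_swap (X Y : Matrix n n 𝕂) :
    exp (fromBlocks X Y Y X) =
      (2⁻¹ : 𝕂) • fromBlocks (exp (X + Y) + exp (X - Y)) (exp (X + Y) - exp (X - Y))
        (exp (X + Y) - exp (X - Y)) (exp (X + Y) + exp (X - Y)) := by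
  rw [fromBlocks_self_swap_eq_conj,
    exp_conj' _ (fromBlocks (X + Y) 0 0 (X - Y)) isUnit_blockHadamard, exp_fromBlocks_zero,
    inv_blockHadamard, smul_mul, smul_mul, blockHadamard]
  simp only [fromBlocks_multiply, fromBlocks_smul]
  congr 1 <;> simp <;> module

theorem exp_neg_mulVec_of_exp_mulVec_eq_smul {Y : Matrix n n 𝕂} {v : n → 𝕂} {c : 𝕂}
    (h : exp Y *ᵥ v = c • v) : exp (-Y) *ᵥ v = c⁻¹ • v := by
  have hv : c • (exp (-Y) *ᵥ v) = v := by
    rw [← mulVec_smul, ← h, mulVec_mulVec, ← exp_add_of_commute _ _ (Commute.refl Y).neg_left,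
      neg_add_cancel, exp_zero, one_mulVec]
  rcases eq_or_ne c 0 with rfl | hc
  · obtain rfl : v = 0 := by simpa using hv.symm
    simp
  · calc exp (-Y) *ᵥ v = c⁻¹ • c • (exp (-Y) *ᵥ v) := by
          rw [smul_smul, inv_mul_cancel₀ hc, one_smul]
      _ = c⁻¹ • v := by rw [hv]

theorem exp_add_mulVec_of_commute {X Y : Matrix n n 𝕂} (hXY : Commute X Y) {v : n → 𝕂} {a b : 𝕂}
    (hX : exp X *ᵥ v = a • v) (hY : exp Y *ᵥ v = b • v) : exp (X + Y) *ᵥ v = (a * b) • v := by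
  rw [exp_add_of_commute X Y hXY, ← mulVec_mulVec, hY, mulVec_smul, hX, smul_smul, mul_comm]

theorem exp_fromBlocks_self_swap_mulVec_inl {X Y : Matrix n n 𝕂} (hXY : Commute X Y) {v : n → 𝕂}
    {μ c : 𝕂} (hX : exp X *ᵥ v = μ • v) (hY : exp Y *ᵥ v = c • v) (hc : c ^ 2 = -1) :
    exp (fromBlocks X Y Y X) *ᵥ Sum.elim v 0 = (μ * c) • Sum.elim (0 : n → 𝕂) v := by
  have hc_inv : c⁻¹ = -c := by
    rw [inv_eq_of_mul_eq_one_right]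
    linear_combination -hc
  have hplus : exp (X + Y) *ᵥ v = (μ * c) • v := exp_add_mulVec_of_commute hXY hX hY
  have hminus : exp (X - Y) *ᵥ v = -(μ * c) • v := by
    rw [sub_eq_add_neg, exp_add_mulVec_of_commute hXY.neg_right hX
      (exp_neg_mulVec_of_exp_mulVec_eq_smul hY), hc_inv, mul_neg, neg_smul]
  rw [exp_fromBlocks_self_swap, smul_mulVec, fromBlocks_mulVec]
  ext (i | i)
  · simp [add_mulVec, hplus, hminus]
  · simp [sub_mulVec, hplus, hminus]
    ring

end Matrix

theorem stmt_16_general {n : Type*} [Fintype n] [DecidableEq n]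
    (A B : Matrix n n ℝ) (hAB : A * B = B * A)
    (u : n) (τ : ℝ) (μ : ℂ) (hμ : ‖μ‖ = 1)
    (hX : (NormedSpace.exp ((Complex.I * (τ : ℂ)) • A.map Complex.ofReal)).mulVec
        (Pi.single u 1 : n → ℂ) = μ • (Pi.single u 1 : n → ℂ))
    (hY : (NormedSpace.exp ((Complex.I * (τ : ℂ)) • B.map Complex.ofReal)).mulVec
          (Pi.single u 1 : n → ℂ) = Complex.I • (Pi.single u 1 : n → ℂ) ∨
        (NormedSpace.exp ((Complex.I * (τ : ℂ)) • B.map Complex.ofReal)).mulVec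
          (Pi.single u 1 : n → ℂ) = (-Complex.I) • (Pi.single u 1 : n → ℂ)) :
    ∃ γ : ℂ, ‖γ‖ = 1 ∧
      (NormedSpace.exp ((Complex.I * (τ : ℂ)) •
          (Matrix.fromBlocks A B B A).map Complex.ofReal)).mulVec
        (Pi.single (Sum.inl u) 1 : n ⊕ n → ℂ)
        = γ • (Pi.single (Sum.inr u) 1 : n ⊕ n → ℂ) := by
  have hXY : Commute ((Complex.I * τ) • A.map Complex.ofReal)
      ((Complex.I * τ) • B.map Complex.ofReal) :=
    ((Commute.map (show Commute A B from hAB) Complex.ofRealHom.mapMatrix).smul_left _).smul_right _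
  obtain ⟨c, hc, hc_sq, hc_norm⟩ : ∃ c : ℂ, exp ((Complex.I * τ) • B.map Complex.ofReal) *ᵥ
      Pi.single u 1 = c • Pi.single u 1 ∧ c ^ 2 = -1 ∧ ‖c‖ = 1 := by
    rcases hY with h | h
    · exact ⟨Complex.I, h, Complex.I_sq, Complex.norm_I⟩
    · exact ⟨-Complex.I, h, by simp, by simp⟩
  refine ⟨μ * c, by rw [norm_mul, hμ, hc_norm, one_mul], ?_⟩
  rw [fromBlocks_map, fromBlocks_smul, ← Sum.elim_single_zero, ← Sum.elim_zero_single]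
  exact exp_fromBlocks_self_swap_mulVec_inl hXY hX hc hc_sq

/-- If `A(X)` and `A(Y)` commute, `X` is periodic at `u` at time `τ > 0` with
unimodular phase `μ`, and `Y` is periodic at `u` at time `τ` with phase `±i`,
then `X ⋉ Y` admits perfect state transfer between `(0,u)` and `(1,u)` at
time `τ`. -/
theorem stmt_16 {n : Type*} [Fintype n] [DecidableEq n]
    (A B : Matrix n n ℝ) (hA : A.IsSymm) (hB : B.IsSymm) (hAB : A * B = B * A)
    (u : n) (τ : ℝ) (hτ : 0 < τ) (μ : ℂ) (hμ : ‖μ‖ = 1)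
    (hX : (NormedSpace.exp ((Complex.I * (τ : ℂ)) • A.map Complex.ofReal)).mulVec
        (Pi.single u 1 : n → ℂ) = μ • (Pi.single u 1 : n → ℂ))
    (hY : (NormedSpace.exp ((Complex.I * (τ : ℂ)) • B.map Complex.ofReal)).mulVec
          (Pi.single u 1 : n → ℂ) = Complex.I • (Pi.single u 1 : n → ℂ) ∨
        (NormedSpace.exp ((Complex.I * (τ : ℂ)) • B.map Complex.ofReal)).mulVec
          (Pi.single u 1 : n → ℂ) = (-Complex.I) • (Pi.single u 1 : n → ℂ)) :
    ∃ γ : ℂ, ‖γ‖ = 1 ∧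
      (NormedSpace.exp ((Complex.I * (τ : ℂ)) •
          (Matrix.fromBlocks A B B A).map Complex.ofReal)).mulVec
        (Pi.single (Sum.inl u) 1 : n ⊕ n → ℂ)
        = γ • (Pi.single (Sum.inr u) 1 : n ⊕ n → ℂ) :=
  stmt_16_general A B hAB u τ μ hμ hX hY
end

section
/- The complete graph K_n with n > 2 vertices admits no perfect state transfer: for all positive times t, distinct vertices u, v, and complex λ, exp(it(J−I)) e_u ≠ λ e_v. -/
/-!
The evolution `U = exp(it(J - I))` commutes with every permutation of the vertices, since
`J - I` does. The transposition of `v` with a third vertex `w` fixes `u`, so `U v u = U w u`.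
If `U e_u = λ e_v`, then `U w u = 0` forces `λ = 0`, contradicting the invertibility of `U`.
-/

open Matrix

theorem Matrix.exp_submatrix {m n 𝔸 : Type*} [Fintype m] [DecidableEq m] [Fintype n] [DecidableEq n]
    [Ring 𝔸] [TopologicalSpace 𝔸] [IsTopologicalRing 𝔸] [Algebra ℚ 𝔸] [T2Space 𝔸]
    (A : Matrix m m 𝔸) (e : n ≃ m) :
    NormedSpace.exp (A.submatrix e e) = (NormedSpace.exp A).submatrix e e := by
  have hpow (k : ℕ) : A.submatrix e e ^ k = (A ^ k).submatrix e e :=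
    (map_pow (reindexRingEquiv 𝔸 e.symm) A k).symm
  have := Function.LeftInverse.map_tsum (fun k : ℕ => (k.factorial⁻¹ : ℚ) • A ^ k)
    (L := .unconditional ℕ) (g := reindexLinearEquiv ℚ 𝔸 e.symm e.symm)
    (continuous_id.matrix_submatrix _ _) (g' := fun B => B.submatrix e.symm e.symm)
    (continuous_id.matrix_submatrix _ _) (fun B => by simp)
  simp_rw [NormedSpace.exp_eq_tsum_rat, hpow]
  simpa using this.symm

theorem Matrix.mulVec_single_ne_smul_single {n K : Type*} [Fintype n] [DecidableEq n] [Field K]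
    {M : Matrix n n K} (hM : IsUnit M) (hinv : ∀ σ : Equiv.Perm n, M.submatrix σ σ = M)
    (hn : 2 < Fintype.card n) {u v : n} (huv : u ≠ v) (lam : K) :
    M *ᵥ Pi.single u 1 ≠ lam • Pi.single v 1 := by
  intro h
  obtain ⟨w, hwu, hwv⟩ := ENat.exists_ne_ne_of_three_le
    (by simpa [ENat.card_eq_coe_fintype_card] using Nat.succ_le_of_lt hn) u v
  have hcol (x : n) : M x u = lam * (Pi.single v 1 : n → K) x := by
    simpa [mulVec_single] using congrFun h x
  have hswap : M w u = M v u := by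
    simpa [Equiv.swap_apply_of_ne_of_ne huv hwu.symm] using
      congrFun (congrFun (hinv (Equiv.swap v w)) v) u
  have hlam : lam = 0 := calc
    lam = M v u := by simp [hcol]
    _ = M w u := hswap.symm
    _ = 0 := by simp [hcol, hwv]
  have hzero : M *ᵥ Pi.single u 1 = M *ᵥ 0 := by rw [h, hlam, zero_smul, mulVec_zero]
  simpa using congrFun (mulVec_injective_iff_isUnit.2 hM hzero) u

theorem stmt_17_general {n : Type*} [Fintype n] [DecidableEq n]
    (hn : 2 < Fintype.card n) (t : ℝ) (u v : n) (huv : u ≠ v) (lam : ℂ) :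
    (NormedSpace.exp ((Complex.I * (t : ℂ)) •
        ((Matrix.of fun _ _ => (1 : ℝ)) - 1 : Matrix n n ℝ).map Complex.ofReal)).mulVec
      (Pi.single u 1 : n → ℂ) ≠ lam • (Pi.single v 1 : n → ℂ) := by
  set A : Matrix n n ℂ := (Complex.I * (t : ℂ)) •
    ((Matrix.of fun _ _ => (1 : ℝ)) - 1 : Matrix n n ℝ).map Complex.ofReal
  have hA (σ : Equiv.Perm n) : A.submatrix σ σ = A := by
    ext i j
    simp [A, one_apply]
  refine mulVec_single_ne_smul_single (isUnit_exp A) (fun σ => ?_) hn huv lam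
  rw [← exp_submatrix, hA]

/-- The complete graph `K_n` with more than two vertices admits no perfect
state transfer: for all positive times `t`, distinct vertices `u ≠ v`, and
complex `λ`, `exp(it(J−I)) e_u ≠ λ e_v`. -/
theorem stmt_17 {n : Type*} [Fintype n] [DecidableEq n]
    (hn : 2 < Fintype.card n) (t : ℝ) (ht : 0 < t) (u v : n) (huv : u ≠ v) (lam : ℂ) :
    (NormedSpace.exp ((Complex.I * (t : ℂ)) •
        ((Matrix.of fun _ _ => (1 : ℝ)) - 1 : Matrix n n ℝ).map Complex.ofReal)).mulVec
      (Pi.single u 1 : n → ℂ) ≠ lam • (Pi.single v 1 : n → ℂ) :=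
  stmt_17_general hn t u v huv lam
end

section
/- For the complete graph K_n (adjacency matrix J − I), the diagonal entry of the transition matrix satisfies |[exp(iτ(J−I))]_{u,u}| = 1 if and only if τ is an integer multiple of 2π/n, and in that case [exp(iτ(J−I))]_{u,u} = e^{−iτ}. -/
/-!
With `P = J / n` the projection onto the constant vectors, `J - I = (n - 1) P - (1 - P)`, so
`exp (iτ(J - I)) = e^{iτ(n-1)} P + e^{-iτ} (1 - P)` and its diagonal entry is
`e^{-iτ} ((1 - 1/n) + e^{iτn}/n)`. For `n ≥ 2` the second factor is a proper convex combination
of the unit complex numbers `1` and `e^{iτn}`; by strict convexity of the disc it has modulus `1`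
exactly when `e^{iτn} = 1`, and then it equals `1`.
-/

theorem IsIdempotentElem.exp_smul_add_smul_one_sub {𝕂 A : Type*} [RCLike 𝕂] [Ring A]
    [Algebra 𝕂 A] [TopologicalSpace A] [IsTopologicalRing A] [ContinuousSMul 𝕂 A] [T2Space A]
    {P : A} (hP : IsIdempotentElem P) (a b : 𝕂) :
    NormedSpace.exp (a • P + b • (1 - P)) =
      NormedSpace.exp a • P + NormedSpace.exp b • (1 - P) := by
  have hpow (k : ℕ) : (a • P + b • (1 - P)) ^ k = a ^ k • P + b ^ k • (1 - P) := by
    induction k with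
    | zero => simp
    | succ k ih =>
      have hQ : IsIdempotentElem (1 - P) := hP.one_sub
      rw [pow_succ, ih]
      simp only [mul_add, add_mul, smul_mul_smul, hP.eq, hQ.eq, hP.mul_one_sub_self,
        hP.one_sub_mul_self, smul_zero, add_zero, zero_add, ← pow_succ]
  have hsum := ((NormedSpace.exp_series_hasSum_exp' (𝕂 := 𝕂) a).smul_const P).add
    ((NormedSpace.exp_series_hasSum_exp' (𝕂 := 𝕂) b).smul_const (1 - P))
  rw [NormedSpace.exp_eq_tsum 𝕂]
  simp only [hpow, smul_add, smul_smul, smul_eq_mul] at hsum ⊢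
  exact hsum.tsum_eq

theorem norm_combo_eq_iff {E : Type*} [NormedAddCommGroup E] [NormedSpace ℝ E]
    [StrictConvexSpace ℝ E] {x y : E} {r a b : ℝ} (hx : ‖x‖ = r) (hy : ‖y‖ = r)
    (ha : 0 < a) (hb : 0 < b) (hab : a + b = 1) :
    ‖a • x + b • y‖ = r ↔ x = y := by
  refine ⟨fun h => ?_, fun h => by rw [h, ← add_smul, hab, one_smul, hy]⟩
  by_contra hne
  exact (norm_combo_lt_of_ne hx.le hy.le hne ha hb hab).ne h

theorem Matrix.isIdempotentElem_inv_card_smul_allOnes {n 𝕜 : Type*} [Fintype n] [Field 𝕜]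
    (hn : (Fintype.card n : 𝕜) ≠ 0) :
    IsIdempotentElem ((Fintype.card n : 𝕜)⁻¹ • Matrix.of fun _ _ : n => (1 : 𝕜)) := by
  ext i j
  simp [Matrix.mul_apply, hn]

theorem Matrix.exp_smul_allOnes_sub_one_apply_self {n : Type*} [Fintype n] [DecidableEq n]
    (hn : Fintype.card n ≠ 0) (c : ℂ) (u : n) :
    NormedSpace.exp (c • (Matrix.of (fun _ _ => (1 : ℂ)) - 1)) u u =
      Complex.exp (-c) * (1 - (Fintype.card n : ℂ)⁻¹ +
        (Fintype.card n : ℂ)⁻¹ * Complex.exp (c * Fintype.card n)) := by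
  have hN : (Fintype.card n : ℂ) ≠ 0 := Nat.cast_ne_zero.mpr hn
  set N : ℂ := (Fintype.card n : ℂ)
  set P : Matrix n n ℂ := N⁻¹ • Matrix.of fun _ _ => 1
  have hsplit :
      c • (Matrix.of (fun _ _ => (1 : ℂ)) - 1) = (c * (N - 1)) • P + (-c) • (1 - P) := by
    simp only [P, smul_smul]
    rw [mul_assoc, sub_mul, mul_inv_cancel₀ hN]
    module
  rw [hsplit, (Matrix.isIdempotentElem_inv_card_smul_allOnes hN).exp_smul_add_smul_one_sub,
    ← Complex.exp_eq_exp_ℂ]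
  simp only [smul_of, sub_apply, add_apply, smul_apply, of_apply, one_apply_eq, Pi.smul_apply,
    smul_eq_mul, mul_one, mul_sub, Complex.exp_sub, Complex.exp_neg]
  field_simp
  ring

theorem Complex.norm_one_sub_add_mul_eq_one_iff {t : ℝ} (ht0 : 0 < t) (ht1 : t < 1) {w : ℂ}
    (hw : ‖w‖ = 1) : ‖1 - (t : ℂ) + t * w‖ = 1 ↔ w = 1 := by
  rw [← norm_combo_eq_iff hw norm_one ht0 (sub_pos.2 ht1) (add_sub_cancel t 1),
    Complex.real_smul, Complex.real_smul, add_comm]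
  push_cast
  ring_nf

theorem Complex.exp_I_mul_mul_natCast_eq_one_iff {N : ℕ} (hN : N ≠ 0) (τ : ℝ) :
    Complex.exp (Complex.I * τ * N) = 1 ↔ ∃ k : ℤ, τ = k * (2 * Real.pi / N) := by
  rw [Complex.exp_eq_one_iff]
  refine exists_congr fun k => ?_
  have : Complex.I * τ * N = ((τ * N : ℝ) : ℂ) * Complex.I := by push_cast; ring
  rw [this, mul_div_assoc', eq_div_iff (Nat.cast_ne_zero.mpr hN), ← mul_assoc,
    mul_left_inj' Complex.I_ne_zero]
  norm_cast

/-- For the complete graph `K_n` (adjacency matrix `J − I`, `n ≥ 2`), the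
diagonal entry of the transition matrix satisfies `|[exp(iτ(J−I))]_{uu}| = 1`
iff `τ` is an integer multiple of `2π/n`, and in that case
`[exp(iτ(J−I))]_{uu} = e^{−iτ}`. -/
theorem stmt_18 {n : Type*} [Fintype n] [DecidableEq n]
    (hn : 2 ≤ Fintype.card n) (τ : ℝ) (u : n) :
    (‖(NormedSpace.exp ((Complex.I * (τ : ℂ)) •
          ((Matrix.of fun _ _ => (1 : ℝ)) - 1 : Matrix n n ℝ).map Complex.ofReal)) u u‖ = 1
      ↔ ∃ k : ℤ, τ = k * (2 * Real.pi / Fintype.card n)) ∧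
    ((∃ k : ℤ, τ = k * (2 * Real.pi / Fintype.card n)) →
      (NormedSpace.exp ((Complex.I * (τ : ℂ)) •
          ((Matrix.of fun _ _ => (1 : ℝ)) - 1 : Matrix n n ℝ).map Complex.ofReal)) u u
        = Complex.exp (-Complex.I * (τ : ℂ))) := by
  have hmap : ((Matrix.of fun _ _ => (1 : ℝ)) - 1 : Matrix n n ℝ).map Complex.ofReal =
      Matrix.of (fun _ _ => (1 : ℂ)) - 1 := by
    ext i j
    by_cases h : i = j <;> simp [h]
  rw [hmap, Matrix.exp_smul_allOnes_sub_one_apply_self (by omega),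
    ← Complex.exp_I_mul_mul_natCast_eq_one_iff (by omega)]
  set N := Fintype.card n
  set w := Complex.exp (Complex.I * τ * N)
  have hw : ‖w‖ = 1 := by simp [w, Complex.norm_exp]
  have hv : ‖Complex.exp (-(Complex.I * τ))‖ = 1 := by simp [Complex.norm_exp]
  have hcombo : ‖1 - (N : ℂ)⁻¹ + (N : ℂ)⁻¹ * w‖ = 1 ↔ w = 1 := by
    have hN : (2 : ℝ) ≤ N := by exact_mod_cast hn
    simpa using Complex.norm_one_sub_add_mul_eq_one_iff (t := (N : ℝ)⁻¹) (by positivity)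
      (inv_lt_one_of_one_lt₀ (by linarith)) hw
  rw [norm_mul, hv, one_mul, hcombo]
  exact ⟨Iff.rfl, fun h => by simp [h]⟩
end
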